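/- arXiv:2504.14347 — 3 statements merged into one kernel-verified Lean document; each statement's English description precedes it below -/
import Mathlib

section
/- Let G be a finite group. For each prime p dividing |G|, fix a Sylow p-subgroup P of G and write |Z(P)| = p^{n_p}. Then |Im(m_G)| ≥ 1 + Σ_p n_p, where the sum runs over the primes p dividing |G|. -/
/-- The Chermak–Delgado measure of a subgroup `H` of `G`: `m_G(H) = |H| * |C_G(H)|`. -/
noncomputable def cdMeasure {G : Type*} [Group G] (H : Subgroup G) : ℕ :=
  Nat.card H * Nat.card (Subgroup.centralizer (H : Set G))

/-- `m*(G)`, the maximal Chermak–Delgado measure over all subgroups of `G`. -/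
noncomputable def cdMax (G : Type*) [Group G] : ℕ :=
  sSup (Set.range (cdMeasure (G := G)))

/-- The Chermak–Delgado lattice of `G`, as the set of subgroups attaining `m*(G)`. -/
def cdLattice (G : Type*) [Group G] : Set (Subgroup G) :=
  {H : Subgroup G | cdMeasure H = cdMax G}

open Subgroup

/-- For `p ^ i` dividing `|Z(P)|` there is a subgroup of `G` of order `p ^ i`
centralized by `P`. -/
lemma cd_exists_subgroup {G : Type*} [Group G] [Finite G] {p : ℕ} (hp : p.Prime)
    (P : Sylow p G) {i : ℕ} (hdvd : p ^ i ∣ Nat.card (Subgroup.center ↥(P : Subgroup G))) :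
    ∃ H : Subgroup G, Nat.card H = p ^ i ∧
      (P : Subgroup G) ≤ Subgroup.centralizer (H : Set G) := by
  haveI : Fact p.Prime := ⟨hp⟩
  obtain ⟨K, hK⟩ := Sylow.exists_subgroup_card_pow_prime p hdvd
  set f : ↥(Subgroup.center ↥(P : Subgroup G)) →* G :=
    (P : Subgroup G).subtype.comp (Subgroup.center ↥(P : Subgroup G)).subtype with hf
  have hfinj : Function.Injective f :=
    Subtype.coe_injective.comp Subtype.coe_injective
  refine ⟨K.map f, ?_, ?_⟩
  · rw [← hK]
    exact (Nat.card_congr (Subgroup.equivMapOfInjective K f hfinj).toEquiv).symm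
  · intro g hg
    rw [Subgroup.mem_centralizer_iff]
    intro x hx
    obtain ⟨z, hz, rfl⟩ := Subgroup.mem_map.mp hx
    have hzc : (z : ↥(P : Subgroup G)) ∈ Subgroup.center ↥(P : Subgroup G) := z.2
    have := Subgroup.mem_center_iff.mp hzc ⟨g, hg⟩
    have := congrArg (fun y : ↥(P : Subgroup G) => (y : G)) this
    simpa [hf] using this.symm

lemma cdMeasure_bot_eq {G : Type*} [Group G] : cdMeasure (⊥ : Subgroup G) = Nat.card G := by
  have h1 : Subgroup.centralizer ((⊥ : Subgroup G) : Set G) = ⊤ := by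
    ext g
    simp [Subgroup.mem_centralizer_iff]
  rw [cdMeasure, h1, Subgroup.card_bot, Subgroup.card_top, one_mul]

/-- Key valuation facts about the measure of the chosen subgroup. -/
lemma cd_exists_value {G : Type*} [Group G] [Finite G] {p : ℕ}
    (hp : p ∈ (Nat.card G).primeFactors) (P : Sylow p G) {i : ℕ}
    (hdvd : p ^ i ∣ Nat.card (Subgroup.center ↥(P : Subgroup G))) :
    ∃ v ∈ Set.range (cdMeasure (G := G)),
      v.factorization p = (Nat.card G).factorization p + i ∧
      ∀ q, q ≠ p → v.factorization q ≤ (Nat.card G).factorization q := by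
  have hpp : p.Prime := Nat.prime_of_mem_primeFactors hp
  haveI : Fact p.Prime := ⟨hpp⟩
  have hG0 : Nat.card G ≠ 0 := Nat.card_pos.ne'
  obtain ⟨H, hHcard, hPC⟩ := cd_exists_subgroup hpp P hdvd
  set c := Nat.card (Subgroup.centralizer (H : Set G)) with hc
  have hc0 : c ≠ 0 := Nat.card_pos.ne'
  have hcdvd : c ∣ Nat.card G := Subgroup.card_subgroup_dvd_card _
  have hcfac : ∀ q : ℕ, c.factorization q ≤ (Nat.card G).factorization q := by
    intro q
    exact (Nat.factorization_le_iff_dvd hc0 hG0).mpr hcdvd q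
  have hP    : (p : ℕ) ^ ((Nat.card G).factorization p) ∣ c := by
    have := Subgroup.card_dvd_of_le hPC
    rwa [Sylow.card_eq_multiplicity P] at this
  have hcp : c.factorization p = (Nat.card G).factorization p :=
    le_antisymm (hcfac p) ((hpp.pow_dvd_iff_le_factorization hc0).mp hP)
  refine ⟨cdMeasure H, Set.mem_range_self H, ?_, ?_⟩
  · rw [cdMeasure, ← hc, hHcard,
      Nat.factorization_mul (pow_ne_zero _ hpp.pos.ne') hc0]
    simp [hpp.factorization_pow, hcp, Nat.add_comm]
  · intro q hq
    rw [cdMeasure, ← hc, hHcard,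
      Nat.factorization_mul (pow_ne_zero _ hpp.pos.ne') hc0]
    simpa [hpp.factorization_pow, Finsupp.single_apply, hq.symm] using hcfac q

/-- If for each prime `p` dividing `|G|` there is a Sylow `p`-subgroup `P` of `G` with
`|Z(P)| = p ^ n p`, then `|Im(m_G)| ≥ 1 + Σ_p n p`, the sum running over the primes
dividing `|G|`. -/
theorem one_add_sum_le_ncard_range_cdMeasure (G : Type*) [Group G] [Finite G]
    (n : ℕ → ℕ)
    (h : ∀ p ∈ (Nat.card G).primeFactors,
      ∃ P : Sylow p G, Nat.card (Subgroup.center ↥(P : Subgroup G)) = p ^ n p) :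
    1 + ∑ p ∈ (Nat.card G).primeFactors, n p ≤ (Set.range (cdMeasure (G := G))).ncard := by
  classical
  have hG0 : Nat.card G ≠ 0 := Nat.card_pos.ne'
  set T : Finset ((_ : ℕ) × ℕ) :=
    (Nat.card G).primeFactors.sigma fun p => Finset.Icc 1 (n p) with hT
  have key : ∀ x : (_ : ℕ) × ℕ, x ∈ T →
      ∃ v ∈ Set.range (cdMeasure (G := G)),
        v.factorization x.1 = (Nat.card G).factorization x.1 + x.2 ∧
        ∀ q, q ≠ x.1 → v.factorization q ≤ (Nat.card G).factorization q := by
    rintro ⟨p, i⟩ hx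
    rw [hT, Finset.mem_sigma, Finset.mem_Icc] at hx
    obtain ⟨P, hP⟩ := h p hx.1
    have hdvd : p ^ i ∣ Nat.card (Subgroup.center ↥(P : Subgroup G)) := by
      rw [hP]; exact pow_dvd_pow p hx.2.2
    exact cd_exists_value hx.1 P hdvd
  choose! g hg1 hg2 hg3 using key
  have hxmem : ∀ x : (_ : ℕ) × ℕ, x ∈ T → x.1 ∈ (Nat.card G).primeFactors ∧ 1 ≤ x.2 := by
    rintro ⟨p, i⟩ hx
    rw [hT, Finset.mem_sigma, Finset.mem_Icc] at hx
    exact ⟨hx.1, hx.2.1⟩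
  have hinj : Set.InjOn g ↑T := by
    rintro ⟨p, i⟩ hx ⟨q, j⟩ hy hxy
    have hx' := Finset.mem_coe.mp hx
    have hy' := Finset.mem_coe.mp hy
    rcases eq_or_ne p q with rfl | hpq
    · have h1 := hg2 _ hx'
      have h2 := hg2 _ hy'
      rw [hxy] at h1
      rw [h1] at h2
      dsimp only at h2
      have : i = j := by omega
      subst this
      rfl
    · exfalso
      have h1 := hg2 _ hx'
      have h2 := hg3 _ hy' p hpq
      rw [hxy] at h1
      rw [h1] at h2
      have h3 := (hxmem _ hx').2
      dsimp only at h1 h2 h3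
      omega
  have hnotmem : Nat.card G ∉ T.image g := by
    rw [Finset.mem_image]
    rintro ⟨x, hx, hgx⟩
    have h1 := hg2 _ hx
    rw [hgx] at h1
    have h3 := (hxmem _ hx).2
    omega
  have hsub : ↑(insert (Nat.card G) (T.image g)) ⊆ Set.range (cdMeasure (G := G)) := by
    intro v hv
    simp only [Finset.coe_insert, Set.mem_insert_iff, Finset.coe_image, Set.mem_image,
      Finset.mem_coe] at hv
    rcases hv with rfl | ⟨x, hx, rfl⟩
    · exact ⟨⊥, cdMeasure_bot_eq⟩
    · exact hg1 x hx
  have hcard : (insert (Nat.card G) (T.image g)).card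
      = 1 + ∑ p ∈ (Nat.card G).primeFactors, n p := by
    rw [Finset.card_insert_of_notMem hnotmem, Finset.card_image_of_injOn hinj, hT,
      Finset.card_sigma]
    simp [Nat.card_Icc, Nat.add_comm]
  calc 1 + ∑ p ∈ (Nat.card G).primeFactors, n p
      = (insert (Nat.card G) (T.image g)).card := hcard.symm
    _ = (↑(insert (Nat.card G) (T.image g)) : Set ℕ).ncard := (Set.ncard_coe_finset _).symm
    _ ≤ (Set.range (cdMeasure (G := G))).ncard :=
        Set.ncard_le_ncard hsub (Set.finite_range _)
end

section
/- Let G be a finite group and H ≤ G a subgroup with H ∈ CD(G). Then C_G(H) ∈ CD(G) and C_G(C_G(H)) = H. -/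
lemma cdMeasure_le_cdMax {G : Type*} [Group G] [Finite G] (H : Subgroup G) :
    cdMeasure H ≤ cdMax G :=
  le_csSup (Set.finite_range _).bddAbove ⟨H, rfl⟩

lemma subgroup_eq_of_le_of_card_le {G : Type*} [Group G] [Finite G] {H K : Subgroup G}
    (h : H ≤ K) (hc : Nat.card K ≤ Nat.card H) : H = K := by
  refine SetLike.coe_injective (Set.eq_of_subset_of_ncard_le h ?_ (Set.toFinite _))
  rwa [← Nat.card_coe_set_eq, ← Nat.card_coe_set_eq]

lemma le_centralizer_centralizer' {G : Type*} [Group G] (H : Subgroup G) :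
    H ≤ Subgroup.centralizer ((Subgroup.centralizer (H : Set G) : Subgroup G) : Set G) := by
  intro x hx
  rw [Subgroup.mem_centralizer_iff]
  intro g hg
  exact (Subgroup.mem_centralizer_iff.mp hg x hx).symm ▸
    (Subgroup.mem_centralizer_iff.mp hg x hx)

/-- If `H ∈ CD(G)`, then `C_G(H) ∈ CD(G)` and `C_G(C_G(H)) = H`. -/
theorem centralizer_mem_cdLattice (G : Type*) [Group G] [Finite G] (H : Subgroup G)
    (hH : H ∈ cdLattice G) :
    Subgroup.centralizer (H : Set G) ∈ cdLattice G ∧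
      Subgroup.centralizer ((Subgroup.centralizer (H : Set G) : Subgroup G) : Set G) = H := by
  set K := Subgroup.centralizer (H : Set G) with hK
  have hle : H ≤ Subgroup.centralizer (K : Set G) := le_centralizer_centralizer' H
  have hcard : Nat.card H ≤ Nat.card (Subgroup.centralizer (K : Set G)) :=
    Subgroup.card_le_of_le hle
  have hKmeas : cdMeasure H ≤ cdMeasure K := by
    unfold cdMeasure
    rw [← hK]
    calc Nat.card H * Nat.card K ≤ Nat.card (Subgroup.centralizer (K : Set G)) * Nat.card K :=
          Nat.mul_le_mul_right _ hcard
      _ = Nat.card K * Nat.card (Subgroup.centralizer (K : Set G)) := Nat.mul_comm _ _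
  have hKmax : cdMeasure K = cdMax G :=
    le_antisymm (cdMeasure_le_cdMax K) (hH ▸ hKmeas)
  refine ⟨hKmax, ?_⟩
  -- from cdMeasure K = cdMax = cdMeasure H, deduce card equality
  have hpos : 0 < Nat.card K := Nat.card_pos
  have heq : Nat.card K * Nat.card (Subgroup.centralizer (K : Set G)) =
      Nat.card H * Nat.card K := by
    have : cdMeasure K = cdMeasure H := hKmax.trans hH.symm
    unfold cdMeasure at this
    rw [← hK] at this
    exact this
  have hcard' : Nat.card (Subgroup.centralizer (K : Set G)) ≤ Nat.card H := by
    nlinarith [heq, hpos]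
  exact (subgroup_eq_of_le_of_card_le hle hcard').symm
end

section
/- Let n ≥ 4 and let Q_{2^n} = ⟨a, b | a^{2^{n-1}} = 1, a^{2^{n-2}} = b^2, b^{-1}ab = a^{-1}⟩ be the generalized quaternion group of order 2^n. Then CD(Q_{2^n}) = { ⟨a⟩ }, i.e., the only subgroup of Q_{2^n} attaining the maximal Chermak–Delgado measure is the cyclic subgroup ⟨a⟩ of index 2. -/
open Subgroup

theorem cdLattice_eq_singleton_of_forall_lt {G : Type*} [Group G] (K : Subgroup G)
    (h : ∀ H : Subgroup G, H ≠ K → cdMeasure H < cdMeasure K) : cdLattice G = {K} := by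
  have hle : ∀ H : Subgroup G, cdMeasure H ≤ cdMeasure K := fun H => by
    rcases eq_or_ne H K with rfl | hH
    exacts [le_rfl, (h H hH).le]
  have hmax : cdMax G = cdMeasure K :=
    le_antisymm (csSup_le (Set.range_nonempty _) (Set.forall_mem_range.2 hle))
      (le_csSup ⟨_, Set.forall_mem_range.2 hle⟩ ⟨K, rfl⟩)
  ext H
  simp only [cdLattice, Set.mem_ofPred_eq, Set.mem_singleton_iff, hmax]
  exact ⟨fun hH => by_contra fun hne => (h H hne).ne hH, fun hH => hH ▸ rfl⟩

namespace Subgroup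

variable {G : Type*} [Group G]

theorem card_le_of_le_zpowers_of_forall_pow_eq_one {g : G} {K : Subgroup G}
    (hK : K ≤ zpowers g) {n : ℕ} (hn : 0 < n) (h : ∀ x ∈ K, x ^ n = 1) : Nat.card K ≤ n := by
  have := isCyclic_of_le hK
  rw [← IsCyclic.exponent_eq_card]
  exact Nat.le_of_dvd hn (Monoid.exponent_dvd_of_forall_pow_eq_one fun x => Subtype.ext (h x x.2))

theorem card_le_index_mul_card_inf (H K : Subgroup G) [H.FiniteIndex] :
    Nat.card K ≤ H.index * Nat.card (H ⊓ K : Subgroup G) := by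
  have hcard : Nat.card (H ⊓ K : Subgroup G) * H.relIndex K = Nat.card K := by
    rw [← relIndex_bot_left, ← relIndex_bot_left, relIndex_inf_mul_relIndex, bot_inf_eq]
  have hrel : H.relIndex K ≤ H.index := by
    simpa using relIndex_le_of_le_right le_top (by simpa using FiniteIndex.index_ne_zero)
  rw [← hcard, mul_comm]
  exact Nat.mul_le_mul_right _ hrel

theorem two_mul_card_le_of_lt {H K : Subgroup G} [Finite K] (h : H < K) :
    2 * Nat.card H ≤ Nat.card K := by
  by_contra! hlt
  exact h.ne (eq_of_le_of_card_ge h.le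
    (Nat.eq_of_dvd_of_lt_two_mul Nat.card_pos.ne' (card_dvd_of_le h.le) hlt).le)

end Subgroup

namespace QuaternionGroup

variable {m : ℕ}

theorem commute_a_xa_iff (i j : ZMod (2 * m)) :
    Commute (a i : QuaternionGroup m) (xa j) ↔ a i ^ 2 = 1 := by
  rw [Commute, SemiconjBy, a_mul_xa, xa_mul_a, sq, a_mul_a, one_def, xa.injEq, a.injEq]
  constructor <;> intro h <;> linear_combination -h

theorem mem_zpowers_a_one_iff [NeZero m] {g : QuaternionGroup m} :
    g ∈ zpowers (a 1) ↔ ∃ i, g = a i := by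
  rw [← mem_powers_iff_mem_zpowers, Submonoid.mem_powers_iff]
  constructor
  · rintro ⟨k, rfl⟩
    exact ⟨k, a_one_pow k⟩
  · rintro ⟨i, rfl⟩
    exact ⟨i.val, by rw [a_one_pow, ZMod.natCast_zmod_val]⟩

theorem exists_xa_mem_of_not_le [NeZero m] {H : Subgroup (QuaternionGroup m)}
    (hH : ¬H ≤ zpowers (a 1)) : ∃ j, xa j ∈ H := by
  obtain ⟨g, hgH, hg⟩ := SetLike.not_le_iff_exists.1 hH
  cases g with
  | a i => exact absurd (mem_zpowers_a_one_iff.2 ⟨i, rfl⟩) hg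
  | xa j => exact ⟨j, hgH⟩

theorem nat_card [NeZero m] : Nat.card (QuaternionGroup m) = 4 * m := by
  rw [Nat.card_eq_fintype_card, card]

theorem card_zpowers_a_one : Nat.card (zpowers (a 1 : QuaternionGroup m)) = 2 * m := by
  rw [Nat.card_zpowers, orderOf_a_one]

theorem index_zpowers_a_one [NeZero m] : (zpowers (a 1 : QuaternionGroup m)).index = 2 := by
  have h := index_mul_card (zpowers (a 1 : QuaternionGroup m))
  rw [card_zpowers_a_one, nat_card] at h
  have : 0 < m := Nat.pos_of_neZero m
  nlinarith

theorem a_one_sq_ne_one (hm : 2 ≤ m) : (a 1 : QuaternionGroup m) ^ 2 ≠ 1 := fun h =>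
  absurd (orderOf_le_of_pow_eq_one two_pos h) (by rw [orderOf_a_one]; omega)

theorem card_le_four_of_forall_sq_eq_one [NeZero m] {K : Subgroup (QuaternionGroup m)}
    (h : ∀ g ∈ K, g ∈ zpowers (a 1) → g ^ 2 = 1) : Nat.card K ≤ 4 := by
  have hinf : Nat.card (zpowers (a 1) ⊓ K : Subgroup (QuaternionGroup m)) ≤ 2 :=
    card_le_of_le_zpowers_of_forall_pow_eq_one inf_le_left two_pos fun g hg => h g hg.2 hg.1
  calc Nat.card K ≤ 2 * Nat.card (zpowers (a 1) ⊓ K : Subgroup (QuaternionGroup m)) := by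
        simpa [index_zpowers_a_one] using card_le_index_mul_card_inf (zpowers (a 1)) K
    _ ≤ 4 := by omega

theorem centralizer_le_zpowers_a_one [NeZero m] {H : Subgroup (QuaternionGroup m)}
    {i : ZMod (2 * m)} (hi : a i ∈ H) (hsq : a i ^ 2 ≠ 1) :
    centralizer (H : Set (QuaternionGroup m)) ≤ zpowers (a 1) := by
  intro g hg
  cases g with
  | a k => exact mem_zpowers_a_one_iff.2 ⟨k, rfl⟩
  | xa k => exact absurd ((commute_a_xa_iff i k).1 (hg _ hi)) hsq

theorem sq_eq_one_of_mem_centralizer [NeZero m] {H : Subgroup (QuaternionGroup m)}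
    {j : ZMod (2 * m)} (hj : xa j ∈ H) {g : QuaternionGroup m}
    (hg : g ∈ centralizer (H : Set (QuaternionGroup m))) (hgA : g ∈ zpowers (a 1)) :
    g ^ 2 = 1 := by
  obtain ⟨k, rfl⟩ := mem_zpowers_a_one_iff.1 hgA
  exact (commute_a_xa_iff k j).1 (hg _ hj).symm

theorem centralizer_zpowers_a_one (hm : 2 ≤ m) :
    centralizer (zpowers (a 1 : QuaternionGroup m) : Set (QuaternionGroup m)) = zpowers (a 1) :=
  have : NeZero m := ⟨by omega⟩
  le_antisymm (centralizer_le_zpowers_a_one (mem_zpowers _) (a_one_sq_ne_one hm)) (le_centralizer _)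

theorem cdMeasure_zpowers_a_one (hm : 2 ≤ m) :
    cdMeasure (zpowers (a 1 : QuaternionGroup m)) = (2 * m) ^ 2 := by
  rw [cdMeasure, centralizer_zpowers_a_one hm, card_zpowers_a_one, sq]

theorem cdMeasure_lt_of_lt_zpowers_a_one (hm : 2 < m) {H : Subgroup (QuaternionGroup m)}
    (hH : H < zpowers (a 1)) : cdMeasure H < (2 * m) ^ 2 := by
  have : NeZero m := ⟨by omega⟩
  have hcard : 2 * Nat.card H ≤ 2 * m := card_zpowers_a_one (m := m) ▸ two_mul_card_le_of_lt hH
  rw [cdMeasure]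
  by_cases hsq : ∀ g ∈ H, g ^ 2 = 1
  · have hH2 := card_le_of_le_zpowers_of_forall_pow_eq_one hH.le two_pos hsq
    have hC := card_le_card_group (centralizer (H : Set (QuaternionGroup m)))
    rw [nat_card] at hC
    nlinarith
  · push Not at hsq
    obtain ⟨g, hgH, hg⟩ := hsq
    obtain ⟨i, rfl⟩ := mem_zpowers_a_one_iff.1 (hH.le hgH)
    have hC := card_le_of_le (centralizer_le_zpowers_a_one hgH hg)
    rw [card_zpowers_a_one] at hC
    nlinarith

theorem cdMeasure_lt_of_not_le_zpowers_a_one (hm : 2 < m) {H : Subgroup (QuaternionGroup m)}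
    (hH : ¬H ≤ zpowers (a 1)) : cdMeasure H < (2 * m) ^ 2 := by
  have : NeZero m := ⟨by omega⟩
  obtain ⟨j, hj⟩ := exists_xa_mem_of_not_le hH
  have hCsq : ∀ g ∈ centralizer (H : Set (QuaternionGroup m)), g ∈ zpowers (a 1) → g ^ 2 = 1 :=
    fun g hg => sq_eq_one_of_mem_centralizer hj hg
  rw [cdMeasure]
  by_cases hsq : ∀ g ∈ H, g ∈ zpowers (a 1) → g ^ 2 = 1
  · have hH4 := card_le_four_of_forall_sq_eq_one hsq
    have hC4 := card_le_four_of_forall_sq_eq_one hCsq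
    nlinarith
  · push Not at hsq
    obtain ⟨g, hgH, hgA, hg⟩ := hsq
    obtain ⟨i, rfl⟩ := mem_zpowers_a_one_iff.1 hgA
    have hCA := centralizer_le_zpowers_a_one hgH hg
    have hC2 := card_le_of_le_zpowers_of_forall_pow_eq_one hCA two_pos
      fun g hg => hCsq g hg (hCA hg)
    have hH := card_le_card_group H
    rw [nat_card] at hH
    nlinarith

end QuaternionGroup

/-- `Q_{2^n}` is realized as the dicyclic group `QuaternionGroup (2 ^ (n - 2))`. -/
theorem cdLattice_quaternionGroup (n : ℕ) (hn : 4 ≤ n) :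
    cdLattice (QuaternionGroup (2 ^ (n - 2))) =
      {Subgroup.zpowers (QuaternionGroup.a 1 : QuaternionGroup (2 ^ (n - 2)))} := by
  have hm : 2 < 2 ^ (n - 2) :=
    calc 2 < 2 ^ 2 := by norm_num
      _ ≤ 2 ^ (n - 2) := Nat.pow_le_pow_right two_pos (by omega)
  refine cdLattice_eq_singleton_of_forall_lt _ fun H hne => ?_
  rw [QuaternionGroup.cdMeasure_zpowers_a_one hm.le]
  by_cases hH : H ≤ zpowers (QuaternionGroup.a 1)
  · exact QuaternionGroup.cdMeasure_lt_of_lt_zpowers_a_one hm (hH.lt_of_ne hne)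
  · exact QuaternionGroup.cdMeasure_lt_of_not_le_zpowers_a_one hm hH
end
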